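/- arXiv:quant-ph/0503052 — 3 statements merged into one kernel-verified Lean document; each statement's English description precedes it below -/
import Mathlib

section
/- Let L be an ℓ×m matrix with entries in ℤ/2 (viewed as {0,1}), and let E be the real ℓ×m matrix whose (j,k) entry is (-1)^{L_{jk}}. If E (as a real linear map ℝ^m → ℝ^ℓ) has a nontrivial kernel, then either L (as a ℤ/2-linear map (ℤ/2)^m → (ℤ/2)^ℓ) has a nontrivial kernel, or there exists v ∈ (ℤ/2)^m such that L·v is the all-ones vector (1,1,…,1). -/
open Matrix

/-- From a nonzero integer kernel vector, get one with an odd entry. -/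
lemma exists_odd_kernel {ℓ m : ℕ} (A : Matrix (Fin ℓ) (Fin m) ℤ) :
    ∀ N : ℕ, ∀ v : Fin m → ℤ, (∑ k, (v k).natAbs) = N → v ≠ 0 → A.mulVec v = 0 →
      ∃ v' : Fin m → ℤ, A.mulVec v' = 0 ∧ ∃ k, ¬ (2 : ℤ) ∣ v' k := by
  intro N
  induction N using Nat.strong_induction_on with
  | _ N ih =>
    intro v hN hv0 hker
    by_cases hodd : ∃ k, ¬ (2 : ℤ) ∣ v k
    · exact ⟨v, hker, hodd⟩
    push_neg at hodd
    set v' : Fin m → ℤ := fun k => v k / 2 with hv'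
    have hvv : v = fun k => 2 * v' k := by
      funext k
      simp [hv', Int.mul_ediv_cancel' (hodd k)]
    have hv'0 : v' ≠ 0 := by
      intro h
      apply hv0
      funext k
      have := congrFun h k
      simp [hvv]
      simpa using congrFun h k
    have hker' : A.mulVec v' = 0 := by
      funext j
      have := congrFun hker j
      rw [hvv] at this
      simp only [Matrix.mulVec, dotProduct] at this ⊢
      have h2 : (2:ℤ) * ∑ k, A j k * v' k = 0 := by
        rw [Finset.mul_sum]
        rw [show (0:ℤ) = (0 : Fin ℓ → ℤ) j from rfl, ← this]
        exact Finset.sum_congr rfl fun k _ => by ring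
      simpa using mul_eq_zero.mp h2
    have hsum : (∑ k, (v' k).natAbs) * 2 = N := by
      rw [← hN, hvv, Finset.sum_mul]
      exact Finset.sum_congr rfl fun k _ => by
        rw [Int.natAbs_mul]; simp [mul_comm]
    have hlt : (∑ k, (v' k).natAbs) < N := by
      have hpos : 0 < N := by
        rw [← hN]
        rcases Function.ne_iff.mp hv0 with ⟨k, hk⟩
        exact Finset.sum_pos' (fun _ _ => Nat.zero_le _) ⟨k, Finset.mem_univ k, Int.natAbs_pos.mpr hk⟩
      omega
    exact ih _ hlt v' rfl hv'0 hker'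

/-- If the ±1 sign matrix `E` of a `ZMod 2` matrix `L` has a
nontrivial real kernel, then either `L` has a nontrivial kernel over `ZMod 2`,
or the all-ones vector is in the image of `L`. -/
theorem lemma_techlemma (ℓ m : ℕ) (L : Matrix (Fin ℓ) (Fin m) (ZMod 2))
    (E : Matrix (Fin ℓ) (Fin m) ℝ)
    (hE : ∀ j k, E j k = (-1 : ℝ) ^ (L j k).val)
    (hker : ∃ v : Fin m → ℝ, v ≠ 0 ∧ E.mulVec v = 0) :
    (∃ w : Fin m → ZMod 2, w ≠ 0 ∧ L.mulVec w = 0) ∨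
    (∃ v : Fin m → ZMod 2, L.mulVec v = fun _ => 1) := by
  obtain ⟨v, hv0, hv⟩ := hker
  set Z : Matrix (Fin ℓ) (Fin m) ℤ := Matrix.of fun j k => (-1 : ℤ) ^ (L j k).val with hZ
  have hEZ : E = Z.map (Int.cast : ℤ → ℝ) := by
    funext j k
    simp [hE, hZ, Matrix.map_apply]
  -- the real Gram matrix has det 0
  set G : Matrix (Fin m) (Fin m) ℤ := Zᵀ * Z with hG
  have hdetR : ((Int.castRingHom ℝ).mapMatrix G).det = 0 := by
    apply Matrix.exists_mulVec_eq_zero_iff.mp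
    refine ⟨v, hv0, ?_⟩
    have : (Int.castRingHom ℝ).mapMatrix G = Eᵀ * E := by
      rw [hG, hEZ]
      rw [show (Int.cast : ℤ → ℝ) = ⇑(Int.castRingHom ℝ) from rfl, RingHom.mapMatrix_apply,
        Matrix.map_mul, Matrix.transpose_map]
    rw [this, ← Matrix.mulVec_mulVec, hv, Matrix.mulVec_zero]
  have hdet : G.det = 0 := by
    have := (RingHom.map_det (Int.castRingHom ℝ) G).trans hdetR
    rw [eq_intCast] at this
    exact_mod_cast this
  obtain ⟨u, hu0, hu⟩ := Matrix.exists_mulVec_eq_zero_iff.mpr hdet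
  -- u is in the kernel of Z over ℤ
  have hZu : Z.mulVec u = 0 := by
    have hdp : (Z *ᵥ u) ⬝ᵥ (Z *ᵥ u) = 0 := by
        rw [Matrix.dotProduct_mulVec, ← Matrix.mulVec_transpose, Matrix.mulVec_mulVec, ← hG, hu,
        zero_dotProduct]
    funext j
    have := (Finset.sum_eq_zero_iff_of_nonneg
      (fun i _ => mul_self_nonneg ((Z *ᵥ u) i))).mp hdp j (Finset.mem_univ j)
    have := mul_self_eq_zero.mp this
    simpa using this
  -- get a kernel vector with an odd entry
  obtain ⟨u', hu', k₀, hk₀⟩ := exists_odd_kernel Z _ u rfl hu0 hZu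
  -- the key row identity
  set A : Fin ℓ → ℤ := fun j => ∑ k, ((L j k).val : ℤ) * u' k with hA
  have hrow : ∀ j, 2 * A j = ∑ k, u' k := by
    intro j
    have h1 : ∑ k, (-1 : ℤ) ^ (L j k).val * u' k = 0 := by
      have := congrFun hu' j
      simpa [Matrix.mulVec, dotProduct, hZ] using this
    have h2 : ∀ k, (-1 : ℤ) ^ (L j k).val = 1 - 2 * ((L j k).val : ℤ) := by
      intro k
      have : (L j k).val < 2 := ZMod.val_lt _
      interval_cases h : (L j k).val <;> simp
    calc 2 * A j = (∑ k, u' k) - ∑ k, (-1 : ℤ) ^ (L j k).val * u' k := by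
          rw [hA, Finset.mul_sum, ← Finset.sum_sub_distrib]
          exact Finset.sum_congr rfl fun k _ => by rw [h2 k]; ring
      _ = ∑ k, u' k := by rw [h1, sub_zero]
  -- reduce mod 2
  set w : Fin m → ZMod 2 := fun k => ((u' k : ℤ) : ZMod 2) with hw
  have hw0 : w ≠ 0 := by
    intro h
    exact hk₀ ((ZMod.intCast_zmod_eq_zero_iff_dvd _ 2).mp (congrFun h k₀))
  have hmul : ∀ j, L.mulVec w j = ((A j : ℤ) : ZMod 2) := by
    intro j
    simp only [Matrix.mulVec, dotProduct, hA, hw]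
    push_cast
    exact Finset.sum_congr rfl fun k _ => by
      rw [ZMod.natCast_val, ZMod.cast_id]
  rcases isEmpty_or_nonempty (Fin ℓ) with hE0 | hne
  · exact Or.inl ⟨w, hw0, funext fun j => (hE0.false j).elim⟩
  obtain ⟨j₀⟩ := hne
  have hAeq : ∀ j, A j = A j₀ := fun j => by
    have := (hrow j).trans (hrow j₀).symm
    omega
  by_cases hc : ((A j₀ : ℤ) : ZMod 2) = 0
  · exact Or.inl ⟨w, hw0, funext fun j => by rw [hmul j, hAeq j, hc]; rfl⟩
  · refine Or.inr ⟨w, funext fun j => ?_⟩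
    rw [hmul j, hAeq j]
    revert hc
    generalize ((A j₀ : ℤ) : ZMod 2) = x
    revert x
    decide
end

section
/- Let ξ₁,…,ξ_m be real numbers, not all zero. Suppose r¹,…,r^ℓ ∈ {0,1}^m are bit strings such that ∑_{i=1}^m (-1)^{r^j_i} ξ_i = 0 for each j = 1,…,ℓ, with ℓ ≥ 1. Then there exists a nonempty subset K ⊆ {1,…,m} of even cardinality such that the sums ∑_{k∈K} r^j_k (mod 2) are equal for all j = 1,…,ℓ. -/
open Finset

private lemma extract_odd {m : ℕ} :
    ∀ (n : ℕ) (z : Fin m → ℤ) (i₀ : Fin m), z i₀ ≠ 0 → (z i₀).natAbs ≤ n →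
    ∃ (a : ℕ) (w : Fin m → ℤ) (i₁ : Fin m), (∀ i, z i = 2 ^ a * w i) ∧ Odd (w i₁) := by
  intro n
  induction n with
  | zero =>
    intro z i₀ hz hle
    exact absurd (Int.natAbs_eq_zero.mp (Nat.le_zero.mp hle)) hz
  | succ n ih =>
    intro z i₀ hz hle
    by_cases hodd : ∃ i, Odd (z i)
    · obtain ⟨i₁, h₁⟩ := hodd
      exact ⟨0, z, i₁, fun i => by ring, h₁⟩
    · push_neg at hodd
      have heven : ∀ i, ∃ k, z i = 2 * k := by
        intro i
        obtain ⟨k, hk⟩ := (Int.even_or_odd (z i)).resolve_right (hodd i)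
        exact ⟨k, by omega⟩
      choose w hw using heven
      have hw0 : w i₀ ≠ 0 := fun h => hz (by rw [hw i₀, h, mul_zero])
      have habs : (z i₀).natAbs = 2 * (w i₀).natAbs := by
        rw [hw i₀, Int.natAbs_mul]; rfl
      have h1 : (w i₀).natAbs ≠ 0 := fun h => hw0 (Int.natAbs_eq_zero.mp h)
      obtain ⟨a, w', i₁, hzw, h₁⟩ := ih w i₀ hw0 (by omega)
      exact ⟨a + 1, w', i₁, fun i => by rw [hw i, hzw i]; ring, h₁⟩

/-- If bit strings `r^1, …, r^ℓ` (ℓ ≥ 1) all annihilate a nonzero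
real vector ξ via the sign sums `∑ (-1)^(r^j_i) ξ_i = 0`, then there is a
nonempty even-cardinality set `K` of indices on which all the bit strings have
the same parity. -/
theorem exists_even_subset_constant_parity (ℓ m : ℕ) (hℓ : 1 ≤ ℓ)
    (ξ : Fin m → ℝ) (hξ : ξ ≠ 0)
    (r : Fin ℓ → Fin m → Fin 2)
    (hr : ∀ j, ∑ i, (-1 : ℝ) ^ ((r j i : ℕ)) * ξ i = 0) :
    ∃ K : Finset (Fin m), K.Nonempty ∧ Even K.card ∧
      ∃ b : ZMod 2, ∀ j, (∑ k ∈ K, ((r j k : ℕ) : ZMod 2)) = b := by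
  have hm : 0 < ℓ := hℓ
  set j₀ : Fin ℓ := ⟨0, hm⟩ with hj₀
  set η : Fin m → ℝ := fun i => (-1 : ℝ) ^ ((r j₀ i : ℕ)) * ξ i with hη
  set e : Fin ℓ → Fin m → ℕ := fun j i => if r j i = r j₀ i then 0 else 1 with he
  have hfin2 : ∀ a b : Fin 2, a ≠ b → a = 0 ∧ b = 1 ∨ a = 1 ∧ b = 0 := by decide
  -- real constraints
  have hsum0 : ∑ i, η i = 0 := hr j₀
  have hsume : ∀ j, ∑ i, (e j i : ℝ) * η i = 0 := by
    intro j
    have key : ∀ i, (2 : ℝ) * ((e j i : ℝ) * η i) =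
        (-1 : ℝ) ^ ((r j₀ i : ℕ)) * ξ i - (-1 : ℝ) ^ ((r j i : ℕ)) * ξ i := by
      intro i
      by_cases h : r j i = r j₀ i
      · simp [he, h, hη]
      · rcases hfin2 _ _ h with ⟨ha, hb⟩ | ⟨ha, hb⟩ <;>
          · simp only [he, hη, if_neg h, ha, hb]
            norm_num
            ring
    have h2 : (2 : ℝ) * ∑ i, (e j i : ℝ) * η i = 0 := by
      rw [Finset.mul_sum]
      calc ∑ i, (2 : ℝ) * ((e j i : ℝ) * η i)
          = ∑ i, ((-1 : ℝ) ^ ((r j₀ i : ℕ)) * ξ i - (-1 : ℝ) ^ ((r j i : ℕ)) * ξ i) :=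
            Finset.sum_congr rfl fun i _ => key i
        _ = 0 := by rw [Finset.sum_sub_distrib, hr j₀, hr j, sub_zero]
    linarith
  -- nonzero coordinate
  have hex : ∃ i, ξ i ≠ 0 := by
    by_contra h
    push_neg at h
    exact hξ (funext h)
  obtain ⟨i₀, hi₀⟩ := hex
  have hηi₀ : η i₀ ≠ 0 := by
    simp only [hη]
    exact mul_ne_zero (pow_ne_zero _ (by norm_num)) hi₀
  -- rational functional
  let B := Module.Basis.ofVectorSpace ℚ ℝ
  have hrepr : B.repr (η i₀) ≠ 0 := by
    simp only [ne_eq, LinearEquiv.map_eq_zero_iff]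
    exact hηi₀
  obtain ⟨b₀, hb₀⟩ := Finsupp.ne_iff.mp hrepr
  simp only [Finsupp.coe_zero, Pi.zero_apply] at hb₀
  set f : ℝ →ₗ[ℚ] ℚ := B.coord b₀ with hf
  set c : Fin m → ℚ := fun i => f (η i) with hc
  have hc0 : c i₀ ≠ 0 := hb₀
  have hc_sum : ∑ i, c i = 0 := by
    rw [hc]
    rw [← map_sum f η Finset.univ, hsum0, map_zero]
  have hc_e : ∀ j, ∑ i, (e j i : ℚ) * c i = 0 := by
    intro j
    have : ∀ i, (e j i : ℚ) * c i = f ((e j i : ℝ) * η i) := by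
      intro i
      have hsmul : (e j i : ℝ) * η i = ((e j i : ℚ)) • η i := by
        rw [Rat.smul_def]; push_cast; ring
      rw [hsmul, map_smul, smul_eq_mul]
    rw [Finset.sum_congr rfl fun i _ => this i, ← map_sum f _ Finset.univ, hsume j, map_zero]
  -- clear denominators
  set D : ℕ := ∏ i, (c i).den with hD
  have hDne : (D : ℚ) ≠ 0 := by
    rw [hD]
    push_cast
    exact Finset.prod_ne_zero_iff.mpr fun i _ => Nat.cast_ne_zero.mpr (c i).den_nz
  have hzint : ∀ i, ∃ n : ℤ, (n : ℚ) = (D : ℚ) * c i := by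
    intro i
    obtain ⟨k, hk⟩ := Finset.dvd_prod_of_mem (fun i => (c i).den) (Finset.mem_univ i)
    refine ⟨(c i).num * k, ?_⟩
    have hden : ((c i).den : ℚ) ≠ 0 := Nat.cast_ne_zero.mpr (c i).den_nz
    have hnum : ((c i).num : ℚ) = c i * (c i).den := (div_eq_iff hden).mp (Rat.num_div_den (c i))
    rw [← hD] at hk
    push_cast [hk, hnum]
    ring
  choose z hz using hzint
  have hz0 : z i₀ ≠ 0 := by
    intro h
    have h1 := hz i₀
    rw [h] at h1
    simp only [Int.cast_zero] at h1
    exact hc0 (by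
      rcases mul_eq_zero.mp h1.symm with h2 | h2
      · exact absurd h2 hDne
      · exact h2)
  -- integer constraints
  have hz_sum : ∑ i, z i = 0 := by
    have : ((∑ i, z i : ℤ) : ℚ) = 0 := by
      push_cast
      rw [Finset.sum_congr rfl fun i _ => hz i, ← Finset.mul_sum, hc_sum, mul_zero]
    exact_mod_cast this
  have hz_e : ∀ j, ∑ i, (e j i : ℤ) * z i = 0 := by
    intro j
    have : ((∑ i, (e j i : ℤ) * z i : ℤ) : ℚ) = 0 := by
      push_cast
      have : ∀ i, (e j i : ℚ) * (z i : ℚ) = (D : ℚ) * ((e j i : ℚ) * c i) := by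
        intro i
        rw [hz i]
        ring
      rw [Finset.sum_congr rfl fun i _ => this i, ← Finset.mul_sum, hc_e j, mul_zero]
    exact_mod_cast this
  -- extract odd part
  obtain ⟨a, w, i₁, hzw, hodd⟩ := extract_odd (z i₀).natAbs z i₀ hz0 le_rfl
  have hpow : (2 : ℤ) ^ a ≠ 0 := pow_ne_zero _ (by norm_num)
  have hw_sum : ∑ i, w i = 0 := by
    have h1 : (2 : ℤ) ^ a * ∑ i, w i = 0 := by
      rw [Finset.mul_sum]
      calc ∑ i, (2 : ℤ) ^ a * w i = ∑ i, z i := Finset.sum_congr rfl fun i _ => (hzw i).symm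
        _ = 0 := hz_sum
    exact (mul_eq_zero.mp h1).resolve_left hpow
  have hw_e : ∀ j, ∑ i, (e j i : ℤ) * w i = 0 := by
    intro j
    have h1 : (2 : ℤ) ^ a * ∑ i, (e j i : ℤ) * w i = 0 := by
      rw [Finset.mul_sum]
      have : ∀ i, (2 : ℤ) ^ a * ((e j i : ℤ) * w i) = (e j i : ℤ) * z i := by
        intro i
        rw [hzw i]
        ring
      rw [Finset.sum_congr rfl fun i _ => this i]
      exact hz_e j
    exact (mul_eq_zero.mp h1).resolve_left hpow
  -- mod 2
  set W : Fin m → ZMod 2 := fun i => ((w i : ℤ) : ZMod 2) with hW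
  set K : Finset (Fin m) := Finset.univ.filter (fun i => W i = 1) with hK
  have hdich : ∀ x : ZMod 2, x = 0 ∨ x = 1 := by decide
  have hWsum : ∑ i, W i = 0 := by
    have h1 : ((∑ i, w i : ℤ) : ZMod 2) = 0 := by rw [hw_sum]; exact Int.cast_zero
    push_cast at h1
    exact h1
  have hWe : ∀ j, ∑ i, (e j i : ZMod 2) * W i = 0 := by
    intro j
    have h1 : ((∑ i, (e j i : ℤ) * w i : ℤ) : ZMod 2) = 0 := by rw [hw_e j]; exact Int.cast_zero
    push_cast at h1
    exact h1
  have hi₁K : i₁ ∈ K := by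
    rw [hK, Finset.mem_filter]
    refine ⟨Finset.mem_univ _, ?_⟩
    obtain ⟨k, hk⟩ := hodd
    rw [hW]
    simp only
    rw [hk]
    push_cast
    have h2 : (2 : ZMod 2) = 0 := rfl
    rw [h2]
    ring
  have hKne : K.Nonempty := ⟨i₁, hi₁K⟩
  -- |K| even
  have hcard : ((K.card : ℕ) : ZMod 2) = 0 := by
    have h1 : ((K.card : ℕ) : ZMod 2) = ∑ k ∈ K, (1 : ZMod 2) := by
      rw [Finset.card_eq_sum_ones K]
      push_cast
      rfl
    rw [h1, hK, Finset.sum_filter]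
    calc ∑ i, (if W i = 1 then (1 : ZMod 2) else 0) = ∑ i, W i :=
          Finset.sum_congr rfl fun i _ => by rcases hdich (W i) with h | h <;> simp [h]
      _ = 0 := hWsum
  have hKeven : Even K.card := by
    have := (ZMod.natCast_eq_zero_iff K.card 2).mp hcard
    exact even_iff_two_dvd.mpr this
  -- intersections even
  have hKe : ∀ j, ∑ k ∈ K, ((e j k : ℕ) : ZMod 2) = 0 := by
    intro j
    rw [hK, Finset.sum_filter]
    calc ∑ i, (if W i = 1 then ((e j i : ℕ) : ZMod 2) else 0) = ∑ i, (e j i : ZMod 2) * W i :=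
          Finset.sum_congr rfl fun i _ => by rcases hdich (W i) with h | h <;> simp [h]
      _ = 0 := hWe j
  -- final
  refine ⟨K, hKne, hKeven, ∑ k ∈ K, ((r j₀ k : ℕ) : ZMod 2), fun j => ?_⟩
  have hpt : ∀ k, ((r j k : ℕ) : ZMod 2) = ((r j₀ k : ℕ) : ZMod 2) + (e j k : ZMod 2) := by
    intro k
    by_cases h : r j k = r j₀ k
    · simp [he, h]
    · have hd : ∀ a b : Fin 2, a ≠ b → ((a : ℕ) : ZMod 2) = ((b : ℕ) : ZMod 2) + 1 := by decide
      simp only [he, if_neg h]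
      push_cast
      exact hd _ _ h
  rw [Finset.sum_congr rfl fun k _ => hpt k, Finset.sum_add_distrib, hKe j, add_zero]
end

section
/- For every n-qubit state vector |ψ⟩ ∈ (ℂ²)^{⊗n} and every k ∈ {1,…,n}, the three vectors A_k|ψ⟩, B_k|ψ⟩, C_k|ψ⟩ are pairwise orthogonal when viewed as real vectors in ℝ^{2^{n+1}}; in particular, if |ψ⟩ ≠ 0 they are linearly independent over ℝ. -/
/-- Flip the `k`-th bit of a multi-index `I ∈ {0,1}^n`. -/
def bitFlip {n : ℕ} (k : Fin n) (I : Fin n → Fin 2) : Fin n → Fin 2 :=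
  Function.update I k (1 - I k)

/-- `A_k|ψ⟩ = ∑_I i (-1)^(i_k) c_I |I⟩`. -/
noncomputable def Aop {n : ℕ} (k : Fin n) (ψ : (Fin n → Fin 2) → ℂ) :
    (Fin n → Fin 2) → ℂ :=
  fun I => Complex.I * (-1 : ℂ) ^ ((I k : ℕ)) * ψ I

/-- `B_k|ψ⟩ = ∑_I (-1)^(i_k) c_{I_k} |I⟩`. -/
noncomputable def Bop {n : ℕ} (k : Fin n) (ψ : (Fin n → Fin 2) → ℂ) :
    (Fin n → Fin 2) → ℂ :=
  fun I => (-1 : ℂ) ^ ((I k : ℕ)) * ψ (bitFlip k I)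

/-- `C_k|ψ⟩ = ∑_I i c_{I_k} |I⟩`. -/
noncomputable def Cop {n : ℕ} (k : Fin n) (ψ : (Fin n → Fin 2) → ℂ) :
    (Fin n → Fin 2) → ℂ :=
  fun I => Complex.I * ψ (bitFlip k I)

/-- Hermitian inner product on `(ℂ²)^{⊗n}` in coordinates. -/
noncomputable def hinner {n : ℕ} (u v : (Fin n → Fin 2) → ℂ) : ℂ :=
  ∑ I, (starRingEnd ℂ) (u I) * v I

/-! ### Auxiliary lemmas -/

lemma bitFlip_invol {n : ℕ} (k : Fin n) : Function.Involutive (bitFlip k) := by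
  intro I; funext j
  by_cases h : j = k
  · subst h; simp [bitFlip]
  · simp [bitFlip, Function.update_of_ne h]

lemma bitFlip_apply_k {n : ℕ} (k : Fin n) (I : Fin n → Fin 2) :
    bitFlip k I k = 1 - I k := by simp [bitFlip]

lemma sum_flip {n : ℕ} (k : Fin n) {M : Type*} [AddCommMonoid M]
    (f : (Fin n → Fin 2) → M) : ∑ I, f (bitFlip k I) = ∑ I, f I :=
  Fintype.sum_bijective (bitFlip k) (bitFlip_invol k).bijective _ _ (fun _ => rfl)

lemma ik_cases {n : ℕ} (k : Fin n) (I : Fin n → Fin 2) :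
    ((I k : ℕ) = 0 ∧ ((bitFlip k I) k : ℕ) = 1) ∨
    ((I k : ℕ) = 1 ∧ ((bitFlip k I) k : ℕ) = 0) := by
  rw [bitFlip_apply_k]; omega

lemma hinner_add_right {n : ℕ} (u v w : (Fin n → Fin 2) → ℂ) :
    hinner u (v + w) = hinner u v + hinner u w := by
  simp [hinner, mul_add, Finset.sum_add_distrib]

lemma hinner_smul_right {n : ℕ} (r : ℝ) (u v : (Fin n → Fin 2) → ℂ) :
    hinner u (r • v) = (r : ℂ) * hinner u v := by
  simp [hinner, Finset.mul_sum, Complex.real_smul, mul_left_comm]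

lemma hinner_zero_right {n : ℕ} (u : (Fin n → Fin 2) → ℂ) :
    hinner u (0 : (Fin n → Fin 2) → ℂ) = 0 := by
  simp [hinner]

lemma hinner_conj_symm {n : ℕ} (u v : (Fin n → Fin 2) → ℂ) :
    hinner v u = (starRingEnd ℂ) (hinner u v) := by
  simp [hinner, map_sum, map_mul, mul_comm]

lemma hinner_self_re {n : ℕ} (u : (Fin n → Fin 2) → ℂ) :
    (hinner u u).re = ∑ I, Complex.normSq (u I) := by
  simp [hinner, Complex.re_sum, ← Complex.normSq_eq_conj_mul_self, Complex.normSq]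

section main
variable {n : ℕ} (k : Fin n) (ψ : (Fin n → Fin 2) → ℂ)

lemma hAB : hinner (Aop k ψ) (Bop k ψ)
    = -Complex.I * ∑ I, (starRingEnd ℂ) (ψ I) * ψ (bitFlip k I) := by
  rw [hinner, Finset.mul_sum]
  refine Finset.sum_congr rfl fun I _ => ?_
  rcases ik_cases k I with ⟨h1, _⟩ | ⟨h1, _⟩ <;>
    simp [Aop, Bop, h1, map_mul, Complex.conj_I] <;> ring

lemma hAC : hinner (Aop k ψ) (Cop k ψ)
    = ∑ I, (-1 : ℂ) ^ ((I k : ℕ)) * ((starRingEnd ℂ) (ψ I) * ψ (bitFlip k I)) := by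
  rw [hinner]
  refine Finset.sum_congr rfl fun I _ => ?_
  simp [Aop, Cop, map_mul, Complex.conj_I]
  ring_nf
  rw [Complex.I_sq]
  ring

lemma S_conj : (starRingEnd ℂ) (∑ I, (starRingEnd ℂ) (ψ I) * ψ (bitFlip k I))
    = ∑ I, (starRingEnd ℂ) (ψ I) * ψ (bitFlip k I) := by
  rw [map_sum]
  rw [← sum_flip k (fun I => (starRingEnd ℂ) (ψ I) * ψ (bitFlip k I))]
  refine Finset.sum_congr rfl fun I _ => ?_
  rw [bitFlip_invol k I]
  simp [map_mul, mul_comm]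

lemma T_conj : (starRingEnd ℂ) (∑ I, (-1 : ℂ) ^ ((I k : ℕ)) * ((starRingEnd ℂ) (ψ I) * ψ (bitFlip k I)))
    = -(∑ I, (-1 : ℂ) ^ ((I k : ℕ)) * ((starRingEnd ℂ) (ψ I) * ψ (bitFlip k I))) := by
  rw [map_sum]
  conv_rhs => rw [← sum_flip k (fun I => (-1 : ℂ) ^ ((I k : ℕ)) * ((starRingEnd ℂ) (ψ I) * ψ (bitFlip k I)))]
  rw [← Finset.sum_neg_distrib]
  refine Finset.sum_congr rfl fun I _ => ?_
  rw [bitFlip_invol k I]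
  rcases ik_cases k I with ⟨h1, h2⟩ | ⟨h1, h2⟩ <;>
    simp [h1, h2, map_mul] <;> ring

lemma hAB_re : (hinner (Aop k ψ) (Bop k ψ)).re = 0 := by
  rw [hAB k ψ]
  have h : (∑ I, (starRingEnd ℂ) (ψ I) * ψ (bitFlip k I)).im = 0 :=
    Complex.conj_eq_iff_im.mp (S_conj k ψ)
  simp [Complex.mul_re, h]

lemma hAC_re : (hinner (Aop k ψ) (Cop k ψ)).re = 0 := by
  rw [hAC k ψ]
  have h := congrArg Complex.re (T_conj k ψ)
  rw [Complex.conj_re, Complex.neg_re] at h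
  linarith

lemma hBC_re : (hinner (Bop k ψ) (Cop k ψ)).re = 0 := by
  rw [hinner, Complex.re_sum]
  refine Finset.sum_eq_zero fun I _ => ?_
  have h : (starRingEnd ℂ) (Bop k ψ I) * Cop k ψ I
      = Complex.I * ((-1 : ℂ) ^ ((I k : ℕ)) * (Complex.normSq (ψ (bitFlip k I)) : ℂ)) := by
    rcases ik_cases k I with ⟨h1, _⟩ | ⟨h1, _⟩ <;>
      simp [Bop, Cop, h1, map_mul, Complex.normSq_eq_conj_mul_self] <;> ring
  rw [h]
  rcases ik_cases k I with ⟨h1, _⟩ | ⟨h1, _⟩ <;> simp [h1]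

lemma hAA_re : (hinner (Aop k ψ) (Aop k ψ)).re = ∑ I, Complex.normSq (ψ I) := by
  rw [hinner_self_re]
  refine Finset.sum_congr rfl fun I _ => ?_
  rcases ik_cases k I with ⟨h1, _⟩ | ⟨h1, _⟩ <;>
    simp [Aop, h1, Complex.normSq_mul, Complex.normSq_I]

lemma hBB_re : (hinner (Bop k ψ) (Bop k ψ)).re = ∑ I, Complex.normSq (ψ I) := by
  rw [hinner_self_re]
  rw [← sum_flip k (fun I => Complex.normSq (ψ I))]
  refine Finset.sum_congr rfl fun I _ => ?_
  rcases ik_cases k I with ⟨h1, _⟩ | ⟨h1, _⟩ <;>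
    simp [Bop, h1, Complex.normSq_mul]

lemma hCC_re : (hinner (Cop k ψ) (Cop k ψ)).re = ∑ I, Complex.normSq (ψ I) := by
  rw [hinner_self_re]
  rw [← sum_flip k (fun I => Complex.normSq (ψ I))]
  refine Finset.sum_congr rfl fun I _ => ?_
  simp [Cop, Complex.normSq_mul, Complex.normSq_I]

end main

/-- For every state vector `ψ` and every `k`, the three vectors
`A_k ψ, B_k ψ, C_k ψ` are pairwise orthogonal as real vectors
(`Re⟨·,·⟩ = 0`), and if `ψ ≠ 0` they are linearly independent over `ℝ`. -/
theorem triple_real_orthogonal_and_independent (n : ℕ)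
    (ψ : (Fin n → Fin 2) → ℂ) (k : Fin n) :
    (hinner (Aop k ψ) (Bop k ψ)).re = 0 ∧
    (hinner (Aop k ψ) (Cop k ψ)).re = 0 ∧
    (hinner (Bop k ψ) (Cop k ψ)).re = 0 ∧
    (ψ ≠ 0 → LinearIndependent ℝ ![Aop k ψ, Bop k ψ, Cop k ψ]) := by
  refine ⟨hAB_re k ψ, hAC_re k ψ, hBC_re k ψ, fun hψ => ?_⟩
  set N : ℝ := ∑ I, Complex.normSq (ψ I) with hNdef
  have hN : 0 < N := by
    obtain ⟨I, hI⟩ := Function.ne_iff.mp hψ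
    exact Finset.sum_pos' (fun i _ => Complex.normSq_nonneg _)
      ⟨I, Finset.mem_univ I, Complex.normSq_pos.mpr hI⟩
  rw [Fintype.linearIndependent_iff]
  intro g hg
  simp only [Fin.sum_univ_three, Matrix.cons_val_zero, Matrix.cons_val_one,
    Matrix.head_cons, Matrix.cons_val_two, Matrix.tail_cons] at hg
  have key : ∀ u : (Fin n → Fin 2) → ℂ,
      g 0 * (hinner u (Aop k ψ)).re + g 1 * (hinner u (Bop k ψ)).re
        + g 2 * (hinner u (Cop k ψ)).re = 0 := by
    intro u
    have e : hinner u (g 0 • Aop k ψ + g 1 • Bop k ψ + g 2 • Cop k ψ) = 0 := by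
      rw [hg, hinner_zero_right]
    rw [hinner_add_right, hinner_add_right, hinner_smul_right, hinner_smul_right,
      hinner_smul_right] at e
    have := congrArg Complex.re e
    simpa [Complex.add_re, Complex.mul_re] using this
  have hBA : (hinner (Bop k ψ) (Aop k ψ)).re = 0 := by
    rw [hinner_conj_symm, Complex.conj_re]; exact hAB_re k ψ
  have hCA : (hinner (Cop k ψ) (Aop k ψ)).re = 0 := by
    rw [hinner_conj_symm, Complex.conj_re]; exact hAC_re k ψ
  have hCB : (hinner (Cop k ψ) (Bop k ψ)).re = 0 := by
    rw [hinner_conj_symm, Complex.conj_re]; exact hBC_re k ψ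
  have e0 := key (Aop k ψ)
  have e1 := key (Bop k ψ)
  have e2 := key (Cop k ψ)
  rw [hAA_re, hAB_re, hAC_re] at e0
  rw [hBA, hBB_re, hBC_re] at e1
  rw [hCA, hCB, hCC_re] at e2
  rw [← hNdef] at e0 e1 e2
  have g0 : g 0 = 0 := by
    have : g 0 * N = 0 := by linarith
    exact (mul_eq_zero.mp this).resolve_right (ne_of_gt hN)
  have g1 : g 1 = 0 := by
    have : g 1 * N = 0 := by linarith
    exact (mul_eq_zero.mp this).resolve_right (ne_of_gt hN)
  have g2 : g 2 = 0 := by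
    have : g 2 * N = 0 := by linarith
    exact (mul_eq_zero.mp this).resolve_right (ne_of_gt hN)
  intro i
  fin_cases i <;> assumption
end
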